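/- Let r3 and r4 move along their guidelines toward their targets p3 and p4 in a convergent manner (so the segment r3 r4 rotates and/or shrinks toward the intersection point g of their guidelines, which lies beyond both targets). Let H(t) be the thin hexagon with main diagonal r3(t) r4(t) at time t. If a point x is initially outside H(0) or on a beacon of H(0), then x remains strictly outside H(t) for all t > 0, because H(t) is obtained from H(0) by a composition of shrinkages about an extreme and rotations about an extreme in the direction away from x. -/

import Mathlib

open EuclideanGeometry Real
open scoped RealInnerProductSpace

noncomputable section

abbrev Pt := EuclideanSpace ℝ (Fin 2)

/-- Cross product of two planar vectors. -/
def cross2 (u v : Pt) : ℝ := u 0 * v 1 - u 1 * v 0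

/-- Rotation of a planar vector by 90 degrees counterclockwise. -/
def rot90 (v : Pt) : Pt := WithLp.toLp 2 ![-(v 1), v 0]

/-- The line through `a` with direction vector `d`. -/
def lineDir (a d : Pt) : Set Pt := {p | cross2 (p - a) d = 0}

/-- The line through two points, as a set. -/
def lineThru (a b : Pt) : Set Pt := (affineSpan ℝ {a, b} : Set Pt)

/-- Strictly convex position in the given cyclic order. -/
def Convex4 (a b c d : Pt) : Prop :=
  (0 < cross2 (b-a) (c-b) ∧ 0 < cross2 (c-b) (d-c) ∧ 0 < cross2 (d-c) (a-d) ∧ 0 < cross2 (a-d) (b-a)) ∨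
  (cross2 (b-a) (c-b) < 0 ∧ cross2 (c-b) (d-c) < 0 ∧ cross2 (d-c) (a-d) < 0 ∧ cross2 (a-d) (b-a) < 0)

/-- `a b c d` in clockwise order: every consecutive triple has negative orientation. -/
def Clockwise4 (a b c d : Pt) : Prop :=
  cross2 (b-a) (c-b) < 0 ∧ cross2 (c-b) (d-c) < 0 ∧ cross2 (d-c) (a-d) < 0 ∧ cross2 (a-d) (b-a) < 0

/-- A (nondegenerate) square: four equal sides and four right angles. -/
def IsSquare4 (a b c d : Pt) : Prop :=
  a ≠ b ∧ dist a b = dist b c ∧ dist b c = dist c d ∧ dist c d = dist d a ∧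
  inner ℝ (b - a) (d - a) = (0:ℝ) ∧ inner ℝ (a - b) (c - b) = (0:ℝ) ∧
  inner ℝ (b - c) (d - c) = (0:ℝ) ∧ inner ℝ (c - d) (a - d) = (0:ℝ)

/-- `q` is the auxiliary point of the target-square construction for `r1 r2 r3 r4`:
`dist r1 q = dist r2 r4`, the lines `r1 q` and `r2 r4` are orthogonal, and the ray
from `r1` through `q` intersects the line `r2 r4`. -/
def IsQPoint (r1 r2 r3 r4 q : Pt) : Prop :=
  dist r1 q = dist r2 r4 ∧ inner ℝ (q - r1) (r4 - r2) = (0:ℝ) ∧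
  ∃ t : ℝ, 0 ≤ t ∧ r1 + t • (q - r1) ∈ lineDir r2 (r4 - r2)

/-- The four beacons of the thin hexagon with main diagonal `u v`. -/
def beaconSet (u v : Pt) : Set Pt :=
  {u + (4:ℝ)⁻¹ • (Real.cos (5 * π / 36) • (v - u) + Real.sin (5 * π / 36) • rot90 (v - u)),
   u + (4:ℝ)⁻¹ • (Real.cos (5 * π / 36) • (v - u) - Real.sin (5 * π / 36) • rot90 (v - u)),
   v - (4:ℝ)⁻¹ • (Real.cos (5 * π / 36) • (v - u) + Real.sin (5 * π / 36) • rot90 (v - u)),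
   v - (4:ℝ)⁻¹ • (Real.cos (5 * π / 36) • (v - u) - Real.sin (5 * π / 36) • rot90 (v - u))}

/-- The (closed) thin hexagon with main diagonal `u v`, as a convex region. -/
def thinHexSet (u v : Pt) : Set Pt :=
  convexHull ℝ (insert u (insert v (beaconSet u v)))

/-!
Send `g` to the origin and the guidelines to the coordinate axes by a similarity, which maps thin
hexagons to thin hexagons. There the moved hexagon `H(t)` has its six vertices, hence all of it,
in the region bounded by the lines of the two edges of `H(0)` on the far side of `r3 r4` from `g`
and strictly (as a robot has moved) on the near side of the line through the two far beacons of
`H(0)`. On the far side of `r3 r4`, where `x` lies, that region is contained in `H(0)` and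
contains none of its beacons, which lie on that line or on the near side of `r3 r4`.
-/

lemma cross2_sub_left (x y d : Pt) : cross2 (x - y) d = cross2 x d - cross2 y d := by
  simp only [cross2, PiLp.sub_apply]; ring

lemma isLinearMap_cross2_left (d : Pt) : IsLinearMap ℝ (fun x => cross2 x d) where
  map_add x y := by simp only [cross2, PiLp.add_apply]; ring
  map_smul a x := by simp only [cross2, PiLp.smul_apply, smul_eq_mul]; ring

lemma convex_cross2_sub_le (p d : Pt) (k : ℝ) : Convex ℝ {x | cross2 (x - p) d ≤ k} := by
  simp_rw [cross2_sub_left, sub_le_iff_le_add]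
  exact convex_halfSpace_le (isLinearMap_cross2_left d) _

lemma convex_cross2_sub_lt (p d : Pt) (k : ℝ) : Convex ℝ {x | cross2 (x - p) d < k} := by
  simp_rw [cross2_sub_left, sub_lt_iff_lt_add]
  exact convex_halfSpace_lt (isLinearMap_cross2_left d) _

lemma norm_sq_eq_add_sq (w : Pt) : ‖w‖ ^ 2 = w 0 ^ 2 + w 1 ^ 2 := by
  simp [EuclideanSpace.norm_sq_eq, Fin.sum_univ_two]

lemma norm_sq_eq_cross2_rot90 (w : Pt) : ‖w‖ ^ 2 = cross2 w (rot90 w) := by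
  simp [norm_sq_eq_add_sq, cross2, rot90]; ring

lemma mem_convexHull_triple_of_cross2_nonneg {a b c x : Pt} (habc : 0 < cross2 (b - a) (c - a))
    (ha : 0 ≤ cross2 (b - x) (c - x)) (hb : 0 ≤ cross2 (c - x) (a - x))
    (hc : 0 ≤ cross2 (a - x) (b - x)) : x ∈ convexHull ℝ {a, b, c} := by
  set D := cross2 (b - a) (c - a)
  set w : Fin 3 → ℝ := ![cross2 (b - x) (c - x) / D, cross2 (c - x) (a - x) / D,
    cross2 (a - x) (b - x) / D]
  have hsum : ∑ i, w i = 1 := by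
    simp only [w, Fin.sum_univ_three, Matrix.cons_val_zero, Matrix.cons_val_one,
      Matrix.cons_val_two, Matrix.head_cons, Matrix.tail_cons]
    field_simp
    simp only [D, cross2, PiLp.sub_apply]; ring
  have hx : x = ∑ i, w i • ![a, b, c] i := by
    simp only [w, Fin.sum_univ_three, Matrix.cons_val_zero, Matrix.cons_val_one,
      Matrix.cons_val_two, Matrix.head_cons, Matrix.tail_cons]
    ext i
    simp only [PiLp.add_apply, PiLp.smul_apply, smul_eq_mul]
    field_simp
    fin_cases i <;> simp [D, cross2] <;> ring
  rw [hx]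
  refine (convex_convexHull ℝ _).sum_mem (fun i _ => ?_) hsum (fun i _ => subset_convexHull ℝ _ ?_)
  · fin_cases i <;> simp [w] <;> positivity
  · fin_cases i <;> simp

lemma sin_five_pi_div_thirty_six_pos : 0 < sin (5 * π / 36) :=
  sin_pos_of_pos_of_lt_pi (by positivity) (by linarith [pi_pos])

lemma one_lt_two_mul_cos_five_pi_div_thirty_six_sq : 1 < 2 * cos (5 * π / 36) ^ 2 := by
  have : 0 < cos (2 * (5 * π / 36)) :=
    cos_pos_of_mem_Ioo ⟨by linarith [pi_pos], by linarith [pi_pos]⟩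
  rw [cos_sq]; linarith

/-- The beacon of `thinHexSet u v` next to `u` on the right of the directed line `u v`. -/
def rightBeacon₁ (u v : Pt) : Pt :=
  u + (4:ℝ)⁻¹ • (cos (5 * π / 36) • (v - u) - sin (5 * π / 36) • rot90 (v - u))

/-- The beacon of `thinHexSet u v` next to `v` on the right of the directed line `u v`. -/
def rightBeacon₂ (u v : Pt) : Pt :=
  v - (4:ℝ)⁻¹ • (cos (5 * π / 36) • (v - u) + sin (5 * π / 36) • rot90 (v - u))

/-- The region bounded by the lines of the two right edges `u (rightBeacon₁ u v)` and
`(rightBeacon₂ u v) v` of `thinHexSet u v`, strictly on the side of `u v` of the line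
through the two right beacons (which is parallel to `u v`). -/
def rightCap (u v : Pt) : Set Pt :=
  {x | cross2 (x - u) (v - u) < sin (5 * π / 36) / 4 * ‖v - u‖ ^ 2 ∧
    cross2 (x - u) (rightBeacon₁ u v - u) ≤ 0 ∧
    cross2 (x - rightBeacon₂ u v) (v - rightBeacon₂ u v) ≤ 0}

lemma cross2_sub_of_mem_beaconSet {u v y : Pt} (hy : y ∈ beaconSet u v) :
    cross2 (y - u) (v - u) = sin (5 * π / 36) / 4 * ‖v - u‖ ^ 2 ∨
      cross2 (y - u) (v - u) = -(sin (5 * π / 36) / 4 * ‖v - u‖ ^ 2) := by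
  rw [norm_sq_eq_cross2_rot90]
  simp only [beaconSet, Set.mem_insert_iff, Set.mem_singleton_iff] at hy
  rcases hy with rfl | rfl | rfl | rfl
  all_goals
    simp only [cross2, rot90, PiLp.add_apply, PiLp.sub_apply, PiLp.smul_apply, smul_eq_mul,
      PiLp.toLp_apply, Matrix.cons_val_zero, Matrix.cons_val_one]
  exacts [.inr (by ring), .inl (by ring), .inl (by ring), .inr (by ring)]

/-- The quadrilateral `u B₁ B₂ v` is cut along its diagonal `u B₂` into two triangles. -/
lemma mem_thinHexSet_of_mem_rightCap {u v x : Pt} (huv : u ≠ v) (hx : x ∈ rightCap u v)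
    (hL : 0 ≤ cross2 (x - u) (v - u)) : x ∈ thinHexSet u v := by
  obtain ⟨hLh, hE₁, hE₂⟩ := hx
  set s := sin (5 * π / 36)
  set c := cos (5 * π / 36)
  set B₁ := rightBeacon₁ u v
  set B₂ := rightBeacon₂ u v
  have hs : 0 < s := sin_five_pi_div_thirty_six_pos
  have hc : c ≤ 1 := cos_le_one _
  have hN : 0 < ‖v - u‖ ^ 2 := by have := sub_ne_zero.2 huv.symm; positivity
  rw [norm_sq_eq_cross2_rot90] at hN hLh
  suffices x ∈ convexHull ℝ {u, B₁, B₂} ∨ x ∈ convexHull ℝ {u, B₂, v} by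
    refine this.elim (fun h => convexHull_mono ?_ h) (fun h => convexHull_mono ?_ h) <;>
      simp [Set.insert_subset_iff, beaconSet, B₁, B₂, rightBeacon₁, rightBeacon₂]
  have hc2 : 0 < 1 - c / 2 := by linarith
  rcases le_or_gt 0 (cross2 (x - u) (B₂ - u)) with hD | hD
  · have hdet := mul_pos (mul_pos hs hc2) hN
    have hLh' := mul_nonneg hc2.le (sub_nonneg.2 hLh.le)
    refine .inl (mem_convexHull_triple_of_cross2_nonneg ?_ ?_ ?_ ?_) <;>
      simp only [B₁, B₂, rightBeacon₁, rightBeacon₂, cross2, rot90, PiLp.add_apply,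
        PiLp.sub_apply, PiLp.smul_apply, smul_eq_mul, PiLp.toLp_apply, Matrix.cons_val_zero,
        Matrix.cons_val_one] at hE₁ hE₂ hD hdet hLh' ⊢
    · linear_combination (1 / 4) * hdet
    · linear_combination hLh'
    · linear_combination hD
    · linear_combination hE₁
  · have hdet := mul_pos hs hN
    refine .inr (mem_convexHull_triple_of_cross2_nonneg ?_ ?_ ?_ ?_) <;>
      simp only [B₁, B₂, rightBeacon₁, rightBeacon₂, cross2, rot90, PiLp.add_apply,
        PiLp.sub_apply, PiLp.smul_apply, smul_eq_mul, PiLp.toLp_apply, Matrix.cons_val_zero,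
        Matrix.cons_val_one] at hE₁ hE₂ hD hdet hL ⊢
    · linear_combination (1 / 4) * hdet
    · linear_combination hE₂
    · linear_combination hL
    · linear_combination hD

lemma mem_thinHexSet_diff_beaconSet_of_mem_rightCap {u v x : Pt} (huv : u ≠ v)
    (hx : x ∈ rightCap u v) (hL : 0 < cross2 (x - u) (v - u)) :
    x ∈ thinHexSet u v \ beaconSet u v := by
  refine ⟨mem_thinHexSet_of_mem_rightCap huv hx hL.le, fun hb => ?_⟩
  rcases cross2_sub_of_mem_beaconSet hb with h | h
  · exact hx.1.ne h
  · have := sin_five_pi_div_thirty_six_pos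
    have : 0 ≤ sin (5 * π / 36) / 4 * ‖v - u‖ ^ 2 := by positivity
    linarith

lemma AffineMap.exists_eq_linear_add (S : Pt →ᵃ[ℝ] Pt) : ∃ t, ∀ p, S p = S.linear p + t :=
  ⟨S 0, fun p => by simpa using S.map_vadd 0 p⟩

lemma image_beaconSet (S : Pt →ᵃ[ℝ] Pt) (hS : ∀ w, S.linear (rot90 w) = rot90 (S.linear w))
    (u v : Pt) : S '' beaconSet u v = beaconSet (S u) (S v) := by
  obtain ⟨t, ht⟩ := S.exists_eq_linear_add
  simp only [beaconSet, Set.image_insert_eq, Set.image_singleton, ht, map_add, map_sub,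
    map_smul, hS, add_sub_add_right_eq_sub]
  congr 1; · module
  congr 1; · module
  congr 1; · module
  exact congrArg _ (by module)

lemma image_thinHexSet (S : Pt →ᵃ[ℝ] Pt) (hS : ∀ w, S.linear (rot90 w) = rot90 (S.linear w))
    (u v : Pt) : S '' thinHexSet u v = thinHexSet (S u) (S v) := by
  rw [thinHexSet, S.image_convexHull, Set.image_insert_eq, Set.image_insert_eq,
    image_beaconSet S hS, thinHexSet]

lemma mapsTo_rightCap (S : Pt →ᵃ[ℝ] Pt) (hS : ∀ w, S.linear (rot90 w) = rot90 (S.linear w))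
    {n : ℝ} (hn : 0 < n) (hcross : ∀ y z, cross2 (S.linear y) (S.linear z) = n * cross2 y z)
    (u v : Pt) : Set.MapsTo S (rightCap u v) (rightCap (S u) (S v)) := by
  have hsub : ∀ p q, S p - S q = S.linear (p - q) := fun p q => (S.linearMap_vsub p q).symm
  have hB₁ : rightBeacon₁ (S u) (S v) = S (rightBeacon₁ u v) := by
    obtain ⟨t, ht⟩ := S.exists_eq_linear_add
    simp only [rightBeacon₁, ht, map_add, map_sub, map_smul, hS, add_sub_add_right_eq_sub]; module
  have hB₂ : rightBeacon₂ (S u) (S v) = S (rightBeacon₂ u v) := by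
    obtain ⟨t, ht⟩ := S.exists_eq_linear_add
    simp only [rightBeacon₂, ht, map_add, map_sub, map_smul, hS, add_sub_add_right_eq_sub]; module
  rintro x ⟨hL, hE₁, hE₂⟩
  simp only [rightCap, Set.mem_ofPred_eq, hB₁, hB₂, hsub, hcross, norm_sq_eq_cross2_rot90, ← hS]
  rw [norm_sq_eq_cross2_rot90] at hL
  refine ⟨?_, mul_nonpos_of_nonneg_of_nonpos hn.le hE₁, mul_nonpos_of_nonneg_of_nonpos hn.le hE₂⟩
  rw [mul_left_comm]
  exact mul_lt_mul_of_pos_left hL hn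

/-- The orientation-preserving similarity sending `0`, `!₂[1, 0]`, `!₂[0, 1]` to `g`, `g + e`,
`g + rot90 e`. -/
def frameMap (g e : Pt) : Pt →ᵃ[ℝ] Pt :=
  ((EuclideanSpace.proj 0 : Pt →L[ℝ] ℝ).toLinearMap.smulRight e +
      (EuclideanSpace.proj 1 : Pt →L[ℝ] ℝ).toLinearMap.smulRight (rot90 e)).toAffineMap +
    AffineMap.const ℝ Pt g

lemma frameMap_linear_apply (g e z : Pt) : (frameMap g e).linear z = z 0 • e + z 1 • rot90 e := by
  simp [frameMap]

lemma frameMap_apply (g e z : Pt) : frameMap g e z = g + z 0 • e + z 1 • rot90 e := by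
  simp [frameMap]; abel

lemma frameMap_linear_rot90 (g e w : Pt) :
    (frameMap g e).linear (rot90 w) = rot90 ((frameMap g e).linear w) := by
  ext i; fin_cases i <;> simp [frameMap_linear_apply, rot90]; ring

lemma cross2_frameMap_linear (g e y z : Pt) :
    cross2 ((frameMap g e).linear y) ((frameMap g e).linear z) = ‖e‖ ^ 2 * cross2 y z := by
  simp [frameMap_linear_apply, norm_sq_eq_cross2_rot90, cross2, rot90]; ring

lemma thinHexSet_std_subset_rightCap {b σ ρ : ℝ} (hb : 0 < b) (hσ₀ : 0 ≤ σ) (hσ₁ : σ ≤ 1)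
    (hρ₀ : 0 ≤ ρ) (hρ₁ : ρ ≤ 1) (hσρ : 0 < σ ∨ 0 < ρ) :
    thinHexSet !₂[1 - σ, 0] !₂[0, (1 - ρ) * b] ⊆ rightCap !₂[1, 0] !₂[0, b] := by
  have hs := sin_five_pi_div_thirty_six_pos
  have hc : 0 < cos (5 * π / 36) := cos_pos_of_mem_Ioo ⟨by linarith [pi_pos], by linarith [pi_pos]⟩
  have hcc := one_lt_two_mul_cos_five_pi_div_thirty_six_sq
  have hsc := sin_sq_add_cos_sq (5 * π / 36)
  rw [rightCap, norm_sq_eq_cross2_rot90, Set.ofPred_and, Set.ofPred_and]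
  refine Set.subset_inter (convexHull_min ?_ (convex_cross2_sub_lt _ _ _))
    (Set.subset_inter (convexHull_min ?_ (convex_cross2_sub_le _ _ _))
      (convexHull_min ?_ (convex_cross2_sub_le _ _ _))) <;>
  simp only [Set.insert_subset_iff, Set.singleton_subset_iff, beaconSet, Set.mem_ofPred_eq,
    rightBeacon₁, rightBeacon₂, cross2, rot90, PiLp.add_apply, PiLp.sub_apply, PiLp.smul_apply,
    smul_eq_mul, PiLp.toLp_apply, Matrix.cons_val_zero, Matrix.cons_val_one]
  all_goals
    set s := sin (5 * π / 36)
    set c := cos (5 * π / 36)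
    have hσb := mul_nonneg hσ₀ hb.le
    have hρb := mul_nonneg hρ₀ hb.le
    have hσ' : 0 ≤ 1 - σ := by linarith
    have hρ' : 0 ≤ 1 - ρ := by linarith
    have hb2s := mul_pos (pow_pos hb 2) hs
    have hc1 : c < 1 := by nlinarith
    have hc4 : 0 ≤ 4 * c - 1 := by nlinarith
  · have hpos : 0 < σ * b + ρ * b * c := by
      rcases hσρ with h | h
      · have := mul_pos h hb; positivity
      · have := mul_pos (mul_pos h hb) hc; positivity
    refine ⟨?_, ?_, ?_, ?_, ?_, ?_⟩ <;>
    linarith [mul_nonneg hσb hc.le, mul_nonneg hρb hc.le, mul_nonneg hσ₀ hs.le,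
      mul_nonneg hρ₀ hb2s.le, mul_nonneg hσb (by linarith : 0 ≤ 1 - c),
      mul_nonneg hρb (by linarith : 0 ≤ 1 - c), mul_nonneg hσb hc4, mul_nonneg hρb hc4,
      mul_nonneg hs.le hσ', mul_nonneg hb2s.le hρ']
  all_goals
    have hq : 0 ≤ 4 * c + 1 - 2 * c ^ 2 := by nlinarith
    have hc2 : 0 ≤ 2 * c ^ 2 - 1 := by linarith
    refine ⟨?_, ?_, ?_, ?_, ?_, ?_⟩ <;>
    linarith [mul_nonneg hσb hc.le, mul_nonneg hρb hc.le, mul_nonneg hσ₀ hs.le,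
      mul_nonneg hρ₀ hb2s.le, mul_nonneg hσb hq, mul_nonneg hρb hq, mul_nonneg hσb hc4,
      mul_nonneg hρb hc4, mul_nonneg hσb hc2, mul_nonneg hρb hc2,
      mul_nonneg (mul_nonneg hs.le hσ') (by linarith : 0 ≤ 2 - c),
      mul_nonneg (mul_nonneg hb2s.le hρ') (by linarith : 0 ≤ 2 - c),
      mul_nonneg hs.le hσ', mul_nonneg hb2s.le hρ', mul_nonneg (mul_nonneg hs.le hσ') hc.le,
      mul_nonneg (mul_nonneg hb2s.le hρ') hc.le, congrArg (σ * b * ·) hsc,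
      congrArg (ρ * b * ·) hsc]

lemma rot90_neg (w : Pt) : rot90 (-w) = -rot90 w := by
  ext i; fin_cases i <;> simp [rot90]

lemma rot90_smul (l : ℝ) (w : Pt) : rot90 (l • w) = l • rot90 w := by
  ext i; fin_cases i <;> simp [rot90]

lemma rot90_rot90 (w : Pt) : rot90 (rot90 w) = -w := by
  ext i; fin_cases i <;> simp [rot90]

lemma beaconSet_comm (u v : Pt) : beaconSet v u = beaconSet u v := by
  rw [beaconSet, beaconSet, show u - v = -(v - u) from (neg_sub v u).symm, rot90_neg]
  have key : ∀ (p q w : Pt) (k l : ℝ),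
      p + (4:ℝ)⁻¹ • (k • -q + l • -w) = p - (4:ℝ)⁻¹ • (k • q + l • w) ∧
      p + (4:ℝ)⁻¹ • (k • -q - l • -w) = p - (4:ℝ)⁻¹ • (k • q - l • w) ∧
      p - (4:ℝ)⁻¹ • (k • -q + l • -w) = p + (4:ℝ)⁻¹ • (k • q + l • w) ∧
      p - (4:ℝ)⁻¹ • (k • -q - l • -w) = p + (4:ℝ)⁻¹ • (k • q - l • w) := by
    intros; refine ⟨?_, ?_, ?_, ?_⟩ <;> module
  simp only [key]
  ext; simp only [Set.mem_insert_iff, Set.mem_singleton_iff]; tauto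

lemma thinHexSet_comm (u v : Pt) : thinHexSet v u = thinHexSet u v := by
  rw [thinHexSet, thinHexSet, beaconSet_comm, Set.insert_comm]

lemma cross2_sub_mul_cross2_sub_comm (x g u v : Pt) :
    cross2 (x - v) (u - v) * cross2 (g - v) (u - v) =
      cross2 (x - u) (v - u) * cross2 (g - u) (v - u) := by
  simp only [cross2, PiLp.sub_apply]; ring

lemma exists_eq_smul_rot90_of_inner_eq_zero {e f : Pt} (he : e ≠ 0) (h : ⟪e, f⟫ = 0) :
    ∃ l : ℝ, f = l • rot90 e := by
  have hN : e 0 ^ 2 + e 1 ^ 2 ≠ 0 := by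
    rw [← norm_sq_eq_add_sq]; exact pow_ne_zero 2 (norm_ne_zero_iff.2 he)
  have h' : e 0 * f 0 + e 1 * f 1 = 0 := by
    simpa [PiLp.inner_apply, Fin.sum_univ_two, mul_comm] using h
  refine ⟨cross2 e f / (e 0 ^ 2 + e 1 ^ 2), ?_⟩
  ext i; fin_cases i <;> simp [rot90, cross2] <;> field_simp
  · linear_combination e 0 * h'
  · linear_combination e 1 * h'

lemma thinHexSet_converge_subset_rightCap {g r₁ r₂ : Pt} {l σ ρ : ℝ} (h₁ : r₁ ≠ g) (hl : 0 < l)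
    (h₂ : r₂ - g = l • rot90 (r₁ - g)) (hσ₀ : 0 ≤ σ) (hσ₁ : σ ≤ 1) (hρ₀ : 0 ≤ ρ) (hρ₁ : ρ ≤ 1)
    (hσρ : 0 < σ ∨ 0 < ρ) :
    thinHexSet (r₁ + σ • (g - r₁)) (r₂ + ρ • (g - r₂)) ⊆ rightCap r₁ r₂ := by
  set S := frameMap g (r₁ - g)
  have hS : ∀ z : Pt, S z = g + z 0 • (r₁ - g) + (z 1 / l) • (r₂ - g) := fun z => by
    rw [frameMap_apply, h₂, smul_smul, div_mul_cancel₀ _ hl.ne']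
  have hr₁ : S !₂[1, 0] = r₁ := by simp [hS]
  have hr₂ : S !₂[0, l] = r₂ := by simp [hS, hl.ne']
  have hu : S !₂[1 - σ, 0] = r₁ + σ • (g - r₁) := by simp [hS]; module
  have hv : S !₂[0, (1 - ρ) * l] = r₂ + ρ • (g - r₂) := by
    simp [hS, mul_div_cancel_right₀ _ hl.ne']; module
  have hn : 0 < ‖r₁ - g‖ ^ 2 := pow_pos (norm_pos_iff.2 (sub_ne_zero.2 h₁)) 2
  rw [← hu, ← hv, ← hr₁, ← hr₂, ← image_thinHexSet S (frameMap_linear_rot90 _ _)]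
  exact (Set.image_mono (thinHexSet_std_subset_rightCap hl hσ₀ hσ₁ hρ₀ hρ₁ hσρ)).trans
    (mapsTo_rightCap S (frameMap_linear_rot90 _ _) hn (cross2_frameMap_linear _ _) _ _).image_subset

lemma cross2_sub_neg_of_eq_smul_rot90 {g r₁ r₂ : Pt} {l : ℝ} (h₁ : r₁ ≠ g) (hl : 0 < l)
    (h₂ : r₂ - g = l • rot90 (r₁ - g)) : cross2 (g - r₁) (r₂ - r₁) < 0 := by
  have hn : 0 < ‖r₁ - g‖ ^ 2 := pow_pos (norm_pos_iff.2 (sub_ne_zero.2 h₁)) 2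
  have : cross2 (g - r₁) (r₂ - r₁) = -(l * ‖r₁ - g‖ ^ 2) := by
    rw [show r₂ - r₁ = (r₂ - g) - (r₁ - g) by abel, h₂, norm_sq_eq_cross2_rot90]
    simp only [cross2, rot90, PiLp.sub_apply, PiLp.smul_apply, smul_eq_mul, PiLp.toLp_apply,
      Matrix.cons_val_zero, Matrix.cons_val_one]
    ring
  rw [this]; exact neg_neg_of_pos (mul_pos hl hn)

theorem not_mem_thinHexSet_converge {g r₁ r₂ x : Pt} {σ ρ : ℝ} (hperp : ⟪g - r₁, g - r₂⟫ = 0)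
    (h₁ : r₁ ≠ g) (h₂ : r₂ ≠ g) (hσ₀ : 0 ≤ σ) (hσ₁ : σ ≤ 1) (hρ₀ : 0 ≤ ρ) (hρ₁ : ρ ≤ 1)
    (hσρ : 0 < σ ∨ 0 < ρ)
    (hside : cross2 (x - r₁) (r₂ - r₁) * cross2 (g - r₁) (r₂ - r₁) < 0)
    (hx : x ∉ thinHexSet r₁ r₂ ∨ x ∈ beaconSet r₁ r₂) :
    x ∉ thinHexSet (r₁ + σ • (g - r₁)) (r₂ + ρ • (g - r₂)) := by
  wlog hl : ∃ l : ℝ, 0 < l ∧ r₂ - g = l • rot90 (r₁ - g) generalizing r₁ r₂ σ ρ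
  · -- swapping the two robots reverses the orientation of the frame `(r₁ - g, r₂ - g)`
    obtain ⟨l, hl'⟩ := exists_eq_smul_rot90_of_inner_eq_zero (sub_ne_zero.2 h₁)
      (by rwa [← neg_sub r₁ g, ← neg_sub r₂ g, inner_neg_neg] at hperp)
    have hl0 : l < 0 := by
      refine lt_of_le_of_ne (not_lt.1 fun h => hl ⟨l, h, hl'⟩) fun h => h₂ ?_
      rw [h, zero_smul, sub_eq_zero] at hl'; exact hl'
    rw [thinHexSet_comm]
    refine this (by rwa [real_inner_comm]) h₂ h₁ hρ₀ hρ₁ hσ₀ hσ₁ hσρ.symm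
      (by rwa [cross2_sub_mul_cross2_sub_comm]) (by rwa [thinHexSet_comm, beaconSet_comm])
      ⟨-l⁻¹, by simpa using inv_pos.2 (neg_pos.2 hl0), ?_⟩
    rw [hl', rot90_smul, rot90_rot90, smul_smul, neg_mul, inv_mul_cancel₀ hl0.ne, neg_smul,
      one_smul, neg_neg]
  obtain ⟨l, hl, hrot⟩ := hl
  intro hmem
  have hneg := cross2_sub_neg_of_eq_smul_rot90 h₁ hl hrot
  have hL : 0 < cross2 (x - r₁) (r₂ - r₁) := by nlinarith
  have h₁₂ : r₁ ≠ r₂ := fun h => by simp [h, cross2] at hL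
  obtain ⟨hin, hnb⟩ := mem_thinHexSet_diff_beaconSet_of_mem_rightCap h₁₂
    (thinHexSet_converge_subset_rightCap h₁ hl hrot hσ₀ hσ₁ hρ₀ hρ₁ hσρ hmem) hL
  exact hx.elim (· hin) hnb

lemma exists_eq_add_smul_of_mem_segment {a b p : Pt} {f : ℝ} (hp : p ∈ segment ℝ a b)
    (hf : f ∈ Set.Icc (0:ℝ) 1) :
    ∃ σ ∈ Set.Icc (0:ℝ) 1, a + f • (p - a) = a + σ • (b - a) := by
  obtain ⟨θ, ⟨hθ₀, hθ₁⟩, rfl⟩ := (segment_eq_image' ℝ a b).subset hp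
  exact ⟨f * θ, ⟨mul_nonneg hf.1 hθ₀, mul_le_one₀ hf.2 hθ₀ hθ₁⟩, by
    rw [add_sub_cancel_left, smul_smul]⟩

theorem stmt17_general (r3 r4 p3 p4 g x : Pt)
    (hperp : inner ℝ (g - r3) (g - r4) = (0:ℝ))
    (h3g : r3 ≠ g) (h4g : r4 ≠ g)
    (hp3 : p3 ∈ segment ℝ r3 g) (hp4 : p4 ∈ segment ℝ r4 g)
    (hside : cross2 (x - r3) (r4 - r3) * cross2 (g - r3) (r4 - r3) < 0)
    (f3 f4 : ℝ → ℝ)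
    (hf3m : ∀ t ≥ (0:ℝ), f3 t ∈ Set.Icc (0:ℝ) 1) (hf4m : ∀ t ≥ (0:ℝ), f4 t ∈ Set.Icc (0:ℝ) 1)
    (R3 R4 : ℝ → Pt)
    (hR3 : ∀ t, R3 t = r3 + f3 t • (p3 - r3)) (hR4 : ∀ t, R4 t = r4 + f4 t • (p4 - r4))
    (hx : x ∉ thinHexSet r3 r4 ∨ x ∈ beaconSet r3 r4) :
    ∀ t > (0:ℝ), (R3 t, R4 t) ≠ (r3, r4) → x ∉ thinHexSet (R3 t) (R4 t) := by
  intro t ht hmoved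
  obtain ⟨σ, ⟨hσ₀, hσ₁⟩, hσ⟩ := exists_eq_add_smul_of_mem_segment hp3 (hf3m t ht.le)
  obtain ⟨ρ, ⟨hρ₀, hρ₁⟩, hρ⟩ := exists_eq_add_smul_of_mem_segment hp4 (hf4m t ht.le)
  rw [hR3, hR4, hσ, hρ] at hmoved ⊢
  have hσρ : 0 < σ ∨ 0 < ρ := by
    by_contra! h
    obtain rfl : σ = 0 := le_antisymm h.1 hσ₀
    obtain rfl : ρ = 0 := le_antisymm h.2 hρ₀
    simp at hmoved
  exact not_mem_thinHexSet_converge hperp h3g h4g hσ₀ hσ₁ hρ₀ hρ₁ hσρ hside hx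

/-- As two convergent robots move monotonically along their perpendicular guidelines toward
their targets, a point that is initially outside the thin hexagon on their segment, or on
one of its beacons, remains strictly outside the moving thin hexagon. -/
theorem stmt17 (r3 r4 p3 p4 g x : Pt)
    (hperp : inner ℝ (g - r3) (g - r4) = (0:ℝ))
    (h3g : r3 ≠ g) (h4g : r4 ≠ g) (h34 : r3 ≠ r4)
    (hp3 : p3 ∈ segment ℝ r3 g) (hp4 : p4 ∈ segment ℝ r4 g)
    (hside : cross2 (x - r3) (r4 - r3) * cross2 (g - r3) (r4 - r3) < 0)
    (f3 f4 : ℝ → ℝ) (hf3 : MonotoneOn f3 (Set.Ici 0)) (hf4 : MonotoneOn f4 (Set.Ici 0))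
    (hf30 : f3 0 = 0) (hf40 : f4 0 = 0)
    (hf3m : ∀ t ≥ (0:ℝ), f3 t ∈ Set.Icc (0:ℝ) 1) (hf4m : ∀ t ≥ (0:ℝ), f4 t ∈ Set.Icc (0:ℝ) 1)
    (R3 R4 : ℝ → Pt)
    (hR3 : ∀ t, R3 t = r3 + f3 t • (p3 - r3)) (hR4 : ∀ t, R4 t = r4 + f4 t • (p4 - r4))
    (hx : x ∉ thinHexSet r3 r4 ∨ x ∈ beaconSet r3 r4) :
    ∀ t > (0:ℝ), (R3 t, R4 t) ≠ (r3, r4) → x ∉ thinHexSet (R3 t) (R4 t) :=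
  stmt17_general r3 r4 p3 p4 g x hperp h3g h4g hp3 hp4 hside f3 f4 hf3m hf4m R3 R4 hR3 hR4 hx

end
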